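/- arXiv:1910.09739 — 2 statements merged into one kernel-verified Lean document; each statement's English description precedes it below -/
import Mathlib

section
/- Let u, v, y ∈ R^N. If ⟨v − y, u⟩ ≠ 0 or ⟨v − y, v⟩ ≠ 0, then there exist α, β ∈ R with ‖α u + β v − y‖ < ‖v − y‖. -/
open scoped RealInnerProductSpace

private lemma step_decreases {N : ℕ} (r w : EuclideanSpace ℝ (Fin N))
    (h : ⟪r, w⟫ ≠ 0) : ∃ t : ℝ, ‖r - t • w‖ < ‖r‖ := by
  have hw : w ≠ 0 := by rintro rfl; simp at h
  have hw2 : (0:ℝ) < ‖w‖ ^ 2 := pow_pos (norm_pos_iff.mpr hw) 2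
  refine ⟨⟪r, w⟫ / ‖w‖ ^ 2, ?_⟩
  have hsq : ‖r - (⟪r, w⟫ / ‖w‖ ^ 2) • w‖ ^ 2 < ‖r‖ ^ 2 := by
    rw [norm_sub_sq_real, real_inner_smul_right, norm_smul, mul_pow, Real.norm_eq_abs]
    have : |⟪r, w⟫ / ‖w‖ ^ 2| ^ 2 * ‖w‖ ^ 2 = ⟪r, w⟫ ^ 2 / ‖w‖ ^ 2 := by
      rw [sq_abs]; field_simp
    rw [this]
    have h1 : 2 * (⟪r, w⟫ / ‖w‖ ^ 2 * ⟪r, w⟫) = 2 * (⟪r, w⟫ ^ 2 / ‖w‖ ^ 2) := by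
      ring
    rw [h1]
    have hpos : 0 < ⟪r, w⟫ ^ 2 / ‖w‖ ^ 2 := div_pos (by positivity) hw2
    linarith
  have := sq_lt_sq' (by nlinarith [norm_nonneg (r - (⟪r, w⟫ / ‖w‖ ^ 2) • w), norm_nonneg r] : -(‖r‖) < ‖r - (⟪r, w⟫ / ‖w‖ ^ 2) • w‖)
  nlinarith [norm_nonneg (r - (⟪r, w⟫ / ‖w‖ ^ 2) • w), norm_nonneg r]

/-- Adding one component strictly decreases the loss (norm version). -/
theorem adding_component_decreases_loss {N : ℕ}
    (u v y : EuclideanSpace ℝ (Fin N))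
    (h : ⟪v - y, u⟫ ≠ 0 ∨ ⟪v - y, v⟫ ≠ 0) :
    ∃ α β : ℝ, ‖α • u + β • v - y‖ < ‖v - y‖ := by
  rcases h with h | h
  · obtain ⟨t, ht⟩ := step_decreases (v - y) u h
    refine ⟨-t, 1, ?_⟩
    have : (-t) • u + (1:ℝ) • v - y = v - y - t • u := by
      simp [neg_smul]; abel
    rwa [this]
  · obtain ⟨t, ht⟩ := step_decreases (v - y) v h
    refine ⟨0, 1 - t, ?_⟩
    have : (0:ℝ) • u + (1 - t) • v - y = v - y - t • v := by
      simp [sub_smul]; abel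
    rwa [this]
end

section
/- Let y ∈ R^N be fixed and let f be drawn uniformly from the unit sphere S^{N−1} ⊂ R^N (N ≥ 2, y ≠ 0). Then for any η > 0, the probability that the angle between f and y lies outside [π/2 − η, π/2 + η] is at most 2·exp(−(N−1)·sin²(η)/2) (a concentration-of-measure bound implying near-orthogonality with high probability for large N). -/
open MeasureTheory Metric Module Real InnerProductGeometry
open scoped RealInnerProductSpace

/-!
If `∠(f, y)` is more than `η` away from `π / 2`, then `f` lies in one of the cones of half-angle
`π / 2 - η` around `±y`. The relation "`x` lies in the cone of half-angle `arccos s` around `f`"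
is symmetric, so integrating it against `μ ⊗ ν`, with `ν` Lebesgue measure on the unit ball, in
both orders, and using that linear isometries act transitively on directions, shows that `μ`
gives such a cone the same proportion as `ν` does. The cone meets the unit ball inside a ball of
radius at most `exp (-s² / 2)`, so this proportion is at most `exp (-N s² / 2)`.
-/

theorem Real.exp_le_four_mul {x : ℝ} (h₀ : 1 / 2 ≤ x) (h₁ : x ≤ 1) : exp x ≤ 4 * x := by
  have hhalf : exp (1 / 2) ≤ 2 := by
    have := exp_bound_div_one_sub_of_interval (x := 1 / 2) (by norm_num) (by norm_num)
    norm_num at this ⊢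
    exact this
  have hone : exp 1 ≤ 4 := exp_one_lt_d9.le.trans (by norm_num)
  have hconv := convexOn_exp.2 (Set.mem_univ (1 / 2 : ℝ)) (Set.mem_univ 1)
    (show 0 ≤ 2 - 2 * x by linarith) (show 0 ≤ 2 * x - 1 by linarith) (by ring)
  simp only [smul_eq_mul] at hconv
  rw [show (2 - 2 * x) * (1 / 2) + (2 * x - 1) * 1 = x by ring] at hconv
  nlinarith

section Geometry

variable {E : Type*} [NormedAddCommGroup E] [InnerProductSpace ℝ E]

/-- `{x ≠ 0 | cos ∠(x, u) > s}` for `u ≠ 0`; normalising by `‖u‖` makes membership symmetric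
in `x` and `u`. -/
def circularCone (u : E) (s : ℝ) : Set E := {x | s * (‖x‖ * ‖u‖) < ⟪x, u⟫}

theorem mem_circularCone {u x : E} {s : ℝ} :
    x ∈ circularCone u s ↔ s * (‖x‖ * ‖u‖) < ⟪x, u⟫ := Iff.rfl

theorem mem_circularCone_comm {u x : E} {s : ℝ} :
    x ∈ circularCone u s ↔ u ∈ circularCone x s := by
  rw [mem_circularCone, mem_circularCone, mul_comm ‖x‖, real_inner_comm]

theorem isOpen_circularCone (u : E) (s : ℝ) : IsOpen (circularCone u s) :=
  isOpen_lt (by fun_prop) (by fun_prop)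

theorem circularCone_smul {c : ℝ} (hc : 0 < c) (u : E) (s : ℝ) :
    circularCone (c • u) s = circularCone u s := by
  ext x
  rw [mem_circularCone, mem_circularCone, norm_smul, real_inner_smul_right,
    Real.norm_of_nonneg hc.le, mul_left_comm ‖x‖, mul_left_comm s, mul_lt_mul_iff_right₀ hc]

theorem preimage_circularCone (L : E ≃ₗᵢ[ℝ] E) (u : E) (s : ℝ) :
    L ⁻¹' circularCone (L u) s = circularCone u s := by
  ext x
  simp only [Set.mem_preimage, mem_circularCone, L.norm_map, L.inner_map_map]

theorem exists_linearIsometryEquiv_apply_eq {u v : E} (h : ‖u‖ = ‖v‖) :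
    ∃ L : E ≃ₗᵢ[ℝ] E, L u = v :=
  ⟨(ℝ ∙ (u - v))ᗮ.reflection, Submodule.reflection_sub h⟩

theorem setOf_angle_lt_or_gt_subset (y : E) {η : ℝ} (hη : 0 ≤ η) :
    {f : E | angle f y < π / 2 - η ∨ π / 2 + η < angle f y} ⊆
      circularCone y (sin η) ∪ circularCone (-y) (sin η) := by
  intro f hf
  have hpos : 0 < ‖f‖ * ‖y‖ := by
    by_contra! h
    have hangle : angle f y = π / 2 := by
      rcases mul_eq_zero.1 (le_antisymm h (by positivity)) with hf0 | hy0
      · rw [norm_eq_zero.1 hf0, angle_zero_left]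
      · rw [norm_eq_zero.1 hy0, angle_zero_right]
    rcases hf with hlt | hgt <;> linarith
  have hinner := cos_angle_mul_norm_mul_norm f y
  rcases hf with h | h
  · have hcos : sin η < cos (angle f y) := by
      rw [← cos_pi_div_two_sub]
      exact cos_lt_cos_of_nonneg_of_le_pi (angle_nonneg f y) (by linarith [pi_pos]) h
    left
    rw [mem_circularCone, ← hinner]
    exact mul_lt_mul_of_pos_right hcos hpos
  · have hcos : cos (angle f y) < -sin η := by
      rw [← cos_add_pi_div_two]
      exact cos_lt_cos_of_nonneg_of_le_pi (by linarith [pi_pos]) (angle_le_pi f y) (by linarith)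
    right
    rw [mem_circularCone, norm_neg, inner_neg_right, ← hinner]
    nlinarith

theorem circularCone_inter_closedBall_subset {u : E} (hu : ‖u‖ = 1) {s t ρ : ℝ} (ht : 0 ≤ t)
    (hρ : 0 ≤ ρ) (h₀ : t ^ 2 ≤ ρ ^ 2) (h₁ : 1 - 2 * t * s + t ^ 2 ≤ ρ ^ 2) :
    circularCone u s ∩ closedBall 0 1 ⊆ closedBall (t • u) ρ := by
  rintro x ⟨hx, hx1⟩
  rw [mem_circularCone, hu, mul_one] at hx
  rw [mem_closedBall_zero_iff] at hx1
  rw [mem_closedBall, dist_eq_norm, ← sq_le_sq₀ (norm_nonneg _) hρ]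
  have hdist : ‖x - t • u‖ ^ 2 = ‖x‖ ^ 2 - 2 * t * ⟪x, u⟫ + t ^ 2 := by
    rw [norm_sub_sq_real, real_inner_smul_right, norm_smul, hu, Real.norm_of_nonneg ht]
    ring
  -- `r² - 2tsr + t²` is convex in `r = ‖x‖ ∈ [0, 1]`, so it is at most its value at `0` or `1`.
  rw [hdist]
  nlinarith [norm_nonneg x, mul_le_mul_of_nonneg_left hx.le ht]

theorem exists_circularCone_inter_closedBall_subset {u : E} (hu : ‖u‖ = 1) {s : ℝ}
    (hs₀ : 0 ≤ s) (hs₁ : s ≤ 1) :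
    ∃ c ρ, 0 ≤ ρ ∧ ρ ≤ exp (-s ^ 2 / 2) ∧ circularCone u s ∩ closedBall 0 1 ⊆ closedBall c ρ := by
  have hexp : exp (-s ^ 2 / 2) ^ 2 = exp (-s ^ 2) := by rw [← exp_nat_mul]; ring_nf
  by_cases hs : s ^ 2 ≤ 1 / 2
  · refine ⟨s • u, √(1 - s ^ 2), sqrt_nonneg _, ?_,
      circularCone_inter_closedBall_subset hu hs₀ (sqrt_nonneg _) ?_ ?_⟩
    · rw [sqrt_le_iff, hexp]
      exact ⟨(exp_pos _).le, by linarith [add_one_le_exp (-s ^ 2)]⟩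
    all_goals rw [sq_sqrt (by linarith)]; linarith
  · have hs₀' : 0 < s := by nlinarith
    refine ⟨(2 * s)⁻¹ • u, (2 * s)⁻¹, by positivity, ?_,
      circularCone_inter_closedBall_subset hu (by positivity) (by positivity) le_rfl ?_⟩
    · rw [← sq_le_sq₀ (by positivity) (exp_pos _).le, hexp, exp_neg, inv_pow]
      exact inv_anti₀ (exp_pos _)
        ((exp_le_four_mul (by linarith) (by nlinarith)).trans_eq (by ring))
    · field_simp
      linarith

end Geometry

section Measure

variable {E : Type*} [NormedAddCommGroup E] [InnerProductSpace ℝ E] [MeasurableSpace E]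
  [BorelSpace E]

theorem addHaar_circularCone_inter_closedBall_le [FiniteDimensional ℝ E] (μ : Measure E)
    [μ.IsAddHaarMeasure] {u : E} (hu : ‖u‖ = 1) {s : ℝ} (hs₀ : 0 ≤ s) (hs₁ : s ≤ 1) :
    μ (circularCone u s ∩ closedBall 0 1) ≤
      ENNReal.ofReal (exp (-finrank ℝ E * s ^ 2 / 2)) * μ (closedBall 0 1) := by
  obtain ⟨c, ρ, hρ₀, hρ, hsub⟩ := exists_circularCone_inter_closedBall_subset hu hs₀ hs₁
  calc μ (circularCone u s ∩ closedBall 0 1) ≤ μ (closedBall c ρ) := measure_mono hsub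
    _ = ENNReal.ofReal (ρ ^ finrank ℝ E) * μ (closedBall 0 1) := μ.addHaar_closedBall' c hρ₀
    _ ≤ ENNReal.ofReal (exp (-s ^ 2 / 2) ^ finrank ℝ E) * μ (closedBall 0 1) := by gcongr
    _ = ENNReal.ofReal (exp (-finrank ℝ E * s ^ 2 / 2)) * μ (closedBall 0 1) := by
      rw [← exp_nat_mul]; ring_nf

theorem measure_circularCone_eq {ν : Measure E} (hν : ∀ L : E ≃ₗᵢ[ℝ] E, ν.map L = ν)
    {u v : E} (hu : u ≠ 0) (hv : v ≠ 0) (s : ℝ) :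
    ν (circularCone u s) = ν (circularCone v s) := by
  obtain ⟨L, hL⟩ := exists_linearIsometryEquiv_apply_eq (u := ‖u‖⁻¹ • u) (v := ‖v‖⁻¹ • v)
    (by simp [norm_smul, hu, hv])
  rw [← circularCone_smul (inv_pos.2 (norm_pos_iff.2 hu)) u s,
    ← circularCone_smul (inv_pos.2 (norm_pos_iff.2 hv)) v s, ← hL, ← preimage_circularCone L,
    ← Measure.map_apply L.continuous.measurable (isOpen_circularCone _ _).measurableSet, hν L]

theorem lintegral_measure_circularCone {μ ν : Measure E} (hμ : ∀ L : E ≃ₗᵢ[ℝ] E, μ.map L = μ)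
    (hν₀ : ∀ᵐ x ∂ν, x ≠ 0) {u : E} (hu : u ≠ 0) (s : ℝ) :
    ∫⁻ x, μ (circularCone x s) ∂ν = μ (circularCone u s) * ν Set.univ := by
  rw [← lintegral_const]
  refine lintegral_congr_ae ?_
  filter_upwards [hν₀] with x hx using measure_circularCone_eq hμ hx hu s

theorem measure_circularCone_mul_measure_univ_comm [FiniteDimensional ℝ E] {μ ν : Measure E}
    [SFinite μ] [SFinite ν]
    (hμ : ∀ L : E ≃ₗᵢ[ℝ] E, μ.map L = μ) (hν : ∀ L : E ≃ₗᵢ[ℝ] E, ν.map L = ν)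
    (hμ₀ : ∀ᵐ x ∂μ, x ≠ 0) (hν₀ : ∀ᵐ x ∂ν, x ≠ 0) {u : E} (hu : u ≠ 0) (s : ℝ) :
    μ (circularCone u s) * ν Set.univ = ν (circularCone u s) * μ Set.univ := by
  set T := {p : E × E | p.2 ∈ circularCone p.1 s}
  have hT : MeasurableSet T :=
    (isOpen_lt (by fun_prop) (by fun_prop) :
      IsOpen {p : E × E | s * (‖p.2‖ * ‖p.1‖) < ⟪p.2, p.1⟫}).measurableSet
  have hslice (x : E) : (fun f ↦ (f, x)) ⁻¹' T = circularCone x s :=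
    Set.ext fun _ ↦ mem_circularCone_comm
  rw [← lintegral_measure_circularCone hμ hν₀ hu, ← lintegral_measure_circularCone hν hμ₀ hu]
  calc ∫⁻ x, μ (circularCone x s) ∂ν = μ.prod ν T := by
        simp_rw [Measure.prod_apply_symm hT, hslice]
    _ = ∫⁻ f, ν (circularCone f s) ∂μ := Measure.prod_apply hT

theorem measure_circularCone_le [FiniteDimensional ℝ E] {μ : Measure E} [IsProbabilityMeasure μ]
    (hμ : ∀ L : E ≃ₗᵢ[ℝ] E, μ.map L = μ) (hμ₀ : ∀ᵐ x ∂μ, x ≠ 0) {u : E} (hu : u ≠ 0)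
    {s : ℝ} (hs₀ : 0 ≤ s) (hs₁ : s ≤ 1) :
    μ (circularCone u s) ≤ ENNReal.ofReal (exp (-finrank ℝ E * s ^ 2 / 2)) := by
  have : Nontrivial E := let ⟨x, hx⟩ := hμ₀.exists; ⟨⟨x, 0, hx⟩⟩
  set B := closedBall (0 : E) 1
  have hB : MeasurableSet B := measurableSet_closedBall
  have hν (L : E ≃ₗᵢ[ℝ] E) : (volume.restrict B).map L = volume.restrict B := by
    have hLB : L ⁻¹' B = B := by ext; simp [B]
    simpa [hLB] using (L.measurePreserving.restrict_preimage hB).map_eq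
  have hν₀ : ∀ᵐ x ∂volume.restrict B, x ≠ 0 := ae_restrict_of_ae (volume.ae_ne 0)
  set v := ‖u‖⁻¹ • u
  have hv : ‖v‖ = 1 := by simp [v, norm_smul, hu]
  have hcone : circularCone u s = circularCone v s :=
    (circularCone_smul (inv_pos.2 (norm_pos_iff.2 hu)) u s).symm
  have hratio := measure_circularCone_mul_measure_univ_comm hμ hν hμ₀ hν₀ hu s
  rw [Measure.restrict_apply_univ, measure_univ, mul_one,
    Measure.restrict_apply (isOpen_circularCone u s).measurableSet, hcone] at hratio
  refine (ENNReal.mul_le_mul_iff_left (measure_closedBall_pos volume 0 one_pos).ne'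
    (measure_closedBall_lt_top (x := (0 : E))).ne).1 ?_
  rw [hcone, hratio]
  exact addHaar_circularCone_inter_closedBall_le volume hv hs₀ hs₁

end Measure

theorem random_unit_vector_nearly_orthogonal_general {N : ℕ}
    (μ : Measure (EuclideanSpace ℝ (Fin N))) [IsProbabilityMeasure μ]
    (hsupp : μ (Metric.sphere (0 : EuclideanSpace ℝ (Fin N)) 1) = 1)
    (hinv : ∀ L : EuclideanSpace ℝ (Fin N) ≃ₗᵢ[ℝ] EuclideanSpace ℝ (Fin N),
      μ.map L = μ)
    (y : EuclideanSpace ℝ (Fin N)) (hy : y ≠ 0)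
    (η : ℝ) (hη : 0 < η) :
    (μ {f | InnerProductGeometry.angle f y < Real.pi / 2 - η ∨
            Real.pi / 2 + η < InnerProductGeometry.angle f y}).toReal ≤
      2 * Real.exp (-((N : ℝ) - 1) * Real.sin η ^ 2 / 2) := by
  have hμ₀ : ∀ᵐ f ∂μ, f ≠ 0 := by
    have hsphere : ∀ᵐ f ∂μ, f ∈ sphere (0 : EuclideanSpace ℝ (Fin N)) 1 :=
      (ae_iff_measure_eq isClosed_sphere.measurableSet.nullMeasurableSet).2
        (hsupp.trans measure_univ.symm)
    filter_upwards [hsphere] with f hf using ne_of_mem_sphere hf one_ne_zero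
  set e := exp (-((N : ℝ) - 1) * sin η ^ 2 / 2)
  refine ENNReal.toReal_le_of_le_ofReal (by positivity) ?_
  obtain hηπ | hηπ := lt_or_ge η (π / 2)
  · have hcone (v : EuclideanSpace ℝ (Fin N)) (hv : v ≠ 0) :
        μ (circularCone v (sin η)) ≤ ENNReal.ofReal e := by
      refine (measure_circularCone_le hinv hμ₀ hv (sin_nonneg_of_nonneg_of_le_pi hη.le
        (by linarith [pi_pos])) (sin_le_one η)).trans ?_
      rw [finrank_euclideanSpace_fin]
      exact ENNReal.ofReal_le_ofReal (exp_le_exp.2 (by linarith [sq_nonneg (sin η)]))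
    calc μ {f | angle f y < π / 2 - η ∨ π / 2 + η < angle f y}
        ≤ μ (circularCone y (sin η) ∪ circularCone (-y) (sin η)) :=
          measure_mono (setOf_angle_lt_or_gt_subset y hη.le)
      _ ≤ ENNReal.ofReal e + ENNReal.ofReal e :=
          (measure_union_le _ _).trans (add_le_add (hcone y hy) (hcone (-y) (neg_ne_zero.2 hy)))
      _ = ENNReal.ofReal (2 * e) := by rw [two_mul, ENNReal.ofReal_add] <;> positivity
  · have hempty : {f | angle f y < π / 2 - η ∨ π / 2 + η < angle f y} = ∅ :=
      Set.eq_empty_of_forall_notMem fun f hf ↦ by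
        rcases hf with h | h <;> linarith [angle_nonneg f y, angle_le_pi f y]
    simp [hempty]

/-- Concentration of measure on the sphere: a uniformly random unit vector is
nearly orthogonal to any fixed direction with high probability. -/
theorem random_unit_vector_nearly_orthogonal {N : ℕ} (hN : 2 ≤ N)
    (μ : Measure (EuclideanSpace ℝ (Fin N))) [IsProbabilityMeasure μ]
    (hsupp : μ (Metric.sphere (0 : EuclideanSpace ℝ (Fin N)) 1) = 1)
    (hinv : ∀ L : EuclideanSpace ℝ (Fin N) ≃ₗᵢ[ℝ] EuclideanSpace ℝ (Fin N),
      μ.map L = μ)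
    (y : EuclideanSpace ℝ (Fin N)) (hy : y ≠ 0)
    (η : ℝ) (hη : 0 < η) :
    (μ {f | InnerProductGeometry.angle f y < Real.pi / 2 - η ∨
            Real.pi / 2 + η < InnerProductGeometry.angle f y}).toReal ≤
      2 * Real.exp (-((N : ℝ) - 1) * Real.sin η ^ 2 / 2) :=
  random_unit_vector_nearly_orthogonal_general μ hsupp hinv y hy η hη
end
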